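/- Let n ≥ 1. If a tuple (k_1, …, k_n) of positive integers does NOT satisfy the condition (k_{i+1} ≥ k_i − 1 for all 1 ≤ i < n and k_n = 1), then there is no ordering ω of the 2n socks {1,…,n} × {0,1} with K_j(x(ω)) = k_j for all j = 1, …, n; equivalently, under the uniform measure on orderings this event has probability zero. -/

import Mathlib

/-- The path associated with an ordering `ω` of the `2n` socks `{1,…,n} × {0,1}`:
`x 0 = 0`, and the path steps up when a new sock type is drawn and down when the
drawn type has already occurred. -/
def sockPath (n : ℕ) (ω : Fin (2 * n) → Fin n × Bool) : ℕ → ℤ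
  | 0 => 0
  | m + 1 =>
    sockPath n ω m +
      if h : m < 2 * n then
        if ∃ i : Fin (2 * n), (i : ℕ) < m ∧ (ω i).1 = (ω ⟨m, h⟩).1 then -1 else 1
      else 0

/-- `Lseq x j` is `L_j(x)`: `L_0(x) = 0` and
`L_j(x) = min { i > L_{j-1}(x) : x (i+1) = x i - 1 }`. -/
noncomputable def Lseq (x : ℕ → ℤ) : ℕ → ℕ
  | 0 => 0
  | j + 1 => sInf {i : ℕ | Lseq x j < i ∧ x (i + 1) = x i - 1}

/-- `Kseq x j` is `K_j(x) = x (L_j(x))`. -/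
noncomputable def Kseq (x : ℕ → ℤ) (j : ℕ) : ℤ := x (Lseq x j)

/-- A Dyck path of length `2n`: a tuple `(x 1, …, x (2n))` of integers with `x 1 = 1`,
`|x (i+1) - x i| = 1` for `1 ≤ i < 2n`, `x i ≥ 0` for `1 ≤ i ≤ 2n - 1`, and `x (2n) = 0`. -/
def IsDyckPath (n : ℕ) (x : ℕ → ℤ) : Prop :=
  x 1 = 1 ∧ (∀ i, 1 ≤ i → i < 2 * n → |x (i + 1) - x i| = 1) ∧
    (∀ i, 1 ≤ i → i ≤ 2 * n - 1 → 0 ≤ x i) ∧ x (2 * n) = 0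

/-!
Along `x(ω)` the path steps down exactly at the second draw of each sock type, so it has `n`
descents, none at time `0`, and `L_1 < ⋯ < L_n` enumerate them (`Nat.nth`). Between two
consecutive descents the path can only rise, hence `K_{j+1} ≥ x(L_j + 1) = K_j - 1`. The last
draw always completes a pair, so `L_n = 2n - 1` and `K_n = (2n - 1) - 2(n - 1) = 1`.
-/

open Finset Nat

section Descents

def IsDescent (x : ℕ → ℤ) (i : ℕ) : Prop := x (i + 1) = x i - 1

variable {x : ℕ → ℤ}

lemma le_of_forall_not_isDescent (hstep : ∀ m, |x (m + 1) - x m| ≤ 1) {a b : ℕ} (hab : a ≤ b)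
    (h : ∀ m, a ≤ m → m < b → ¬ IsDescent x m) : x a ≤ x b := by
  induction b, hab using Nat.le_induction with
  | base => exact le_rfl
  | succ b hab ih =>
    have hprev := ih fun m ham hmb => h m ham (by omega)
    have hb : ¬ IsDescent x b := h b hab (lt_add_one b)
    have hstep_b := abs_le.mp (hstep b)
    unfold IsDescent at hb
    omega

lemma Lseq_succ_eq_nth (h0 : ¬ IsDescent x 0) {j : ℕ} (hj : nth (IsDescent x) j ≠ 0) :
    Lseq x (j + 1) = nth (IsDescent x) j := by
  classical
  induction j with
  | zero =>
    rw [Lseq, Lseq, nth_zero]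
    congr 1
    ext i
    exact ⟨fun h => h.2, fun h => ⟨Nat.pos_of_ne_zero (by rintro rfl; exact h0 h), h⟩⟩
  | succ j ih =>
    have hj' : nth (IsDescent x) j ≠ 0 := nth_ne_zero_anti h0 j.le_succ hj
    have hcount : count (IsDescent x) (nth (IsDescent x) j + 1) = j + 1 :=
      count_nth_succ (lt_card_toFinset_of_nth_ne_zero hj')
    rw [Lseq, ih hj', ← hcount, nth_count_eq_sInf]
    congr 1
    ext i
    exact and_comm

lemma Kseq_sub_one_le_Kseq_succ (hstep : ∀ m, |x (m + 1) - x m| ≤ 1) (h0 : ¬ IsDescent x 0)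
    {j : ℕ} (hj1 : 1 ≤ j) (hj : nth (IsDescent x) j ≠ 0) : Kseq x j - 1 ≤ Kseq x (j + 1) := by
  obtain ⟨i, rfl⟩ : ∃ i, j = i + 1 := ⟨j - 1, by omega⟩
  have hi : nth (IsDescent x) i ≠ 0 := nth_ne_zero_anti h0 i.le_succ hj
  have hdesc : x (nth (IsDescent x) i + 1) = x (nth (IsDescent x) i) - 1 :=
    nth_mem_of_ne_zero hi
  have hlt : nth (IsDescent x) i + 1 ≤ nth (IsDescent x) (i + 1) :=
    nth_lt_nth' (lt_add_one i) (lt_card_toFinset_of_nth_ne_zero hj)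
  have hrise := le_of_forall_not_isDescent hstep hlt fun m him hmi hm =>
    (le_nth_of_lt_nth_succ hmi hm).not_gt him
  rw [Kseq, Kseq, Lseq_succ_eq_nth h0 hi, Lseq_succ_eq_nth h0 hj]
  linarith

end Descents

lemma two_mul_card_filter_lt_of_involutive {β : Type*} [Fintype β] [LinearOrder β] {σ : β → β}
    (hσ : Function.Involutive σ) (hfix : ∀ b, σ b ≠ b) :
    2 * #{b | σ b < b} = Fintype.card β := by
  have hswap : #{b | σ b < b} = #{b | ¬ σ b < b} := by
    refine card_nbij' σ σ ?_ ?_ (fun b _ => hσ b) (fun b _ => hσ b)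
    · intro b hb
      simp only [coe_filter, mem_univ, true_and, Set.mem_ofPred_eq, hσ b] at hb ⊢
      exact hb.not_gt
    · intro b hb
      simp only [coe_filter, mem_univ, true_and, Set.mem_ofPred_eq, hσ b, not_lt] at hb ⊢
      exact lt_of_le_of_ne hb (hfix b).symm
  rw [two_mul]
  nth_rw 2 [hswap]
  rw [card_filter_add_card_filter_not, Finset.card_univ]

section Partner

variable {ι α : Type*} (ω : ι ≃ α × Bool)

def partner (i : ι) : ι := ω.symm ((ω i).1, !(ω i).2)

lemma apply_partner (i : ι) : ω (partner ω i) = ((ω i).1, !(ω i).2) :=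
  ω.apply_symm_apply _

lemma partner_involutive : Function.Involutive (partner ω) := fun i =>
  ω.injective (by simp [apply_partner])

lemma partner_ne (i : ι) : partner ω i ≠ i := fun h => by
  simpa using congrArg Prod.snd ((apply_partner ω i).symm.trans (congrArg ω h))

lemma fst_apply_eq_iff (i j : ι) : (ω j).1 = (ω i).1 ↔ j = i ∨ j = partner ω i := by
  refine ⟨fun h => ?_, ?_⟩
  · rcases Bool.eq_or_eq_not (ω j).2 (ω i).2 with h2 | h2
    · exact .inl (ω.injective (Prod.ext h h2))
    · exact .inr (ω.injective (by rw [apply_partner]; exact Prod.ext h h2))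
  · rintro (rfl | rfl)
    · rfl
    · rw [apply_partner]

lemma exists_lt_fst_eq_iff [Preorder ι] (i : ι) :
    (∃ j, j < i ∧ (ω j).1 = (ω i).1) ↔ partner ω i < i := by
  simp only [fst_apply_eq_iff]
  constructor
  · rintro ⟨j, hj, rfl | rfl⟩
    · exact absurd hj (lt_irrefl j)
    · exact hj
  · exact fun h => ⟨_, h, .inr rfl⟩

end Partner

section SockPath

variable {n : ℕ} (ω : Fin (2 * n) ≃ Fin n × Bool)

def IsRepeat (m : ℕ) : Prop := ∃ h : m < 2 * n, partner ω ⟨m, h⟩ < ⟨m, h⟩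

instance : DecidablePred (IsRepeat ω) := fun _ => inferInstanceAs (Decidable (∃ _, _))

lemma isRepeat_iff (i : Fin (2 * n)) : IsRepeat ω i ↔ partner ω i < i :=
  ⟨fun ⟨_, h⟩ => h, fun h => ⟨i.2, h⟩⟩

lemma not_isRepeat_zero : ¬ IsRepeat ω 0 := fun ⟨_, h⟩ => Nat.not_lt_zero _ h

lemma isRepeat_two_mul_sub_one (hn : 1 ≤ n) : IsRepeat ω (2 * n - 1) := by
  refine ⟨by omega, ?_⟩
  have hne := Fin.val_ne_of_ne (partner_ne ω ⟨2 * n - 1, by omega⟩)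
  have hlt := (partner ω ⟨2 * n - 1, by omega⟩).isLt
  rw [Fin.lt_def]
  dsimp only at hne ⊢
  omega

lemma sockPath_succ_of_lt {m : ℕ} (hm : m < 2 * n) :
    sockPath n ω (m + 1) = sockPath n ω m + if IsRepeat ω m then -1 else 1 := by
  rw [sockPath, dif_pos hm]
  congr 2
  exact propext ((exists_lt_fst_eq_iff ω ⟨m, hm⟩).trans (isRepeat_iff ω ⟨m, hm⟩).symm)

lemma sockPath_succ_of_le {m : ℕ} (hm : 2 * n ≤ m) : sockPath n ω (m + 1) = sockPath n ω m := by
  rw [sockPath, dif_neg hm.not_gt, add_zero]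

lemma abs_sockPath_succ_sub_le (m : ℕ) : |sockPath n ω (m + 1) - sockPath n ω m| ≤ 1 := by
  rcases lt_or_ge m (2 * n) with hm | hm
  · rw [sockPath_succ_of_lt ω hm]
    split_ifs <;> simp
  · simp [sockPath_succ_of_le ω hm]

lemma isDescent_sockPath : IsDescent (sockPath n ω) = IsRepeat ω := by
  ext m
  rcases lt_or_ge m (2 * n) with hm | hm
  · rw [IsDescent, sockPath_succ_of_lt ω hm]
    split_ifs with h <;> simp [h, sub_eq_add_neg]
  · rw [IsDescent, sockPath_succ_of_le ω hm]
    simp only [IsRepeat, hm.not_gt, IsEmpty.exists_iff, iff_false]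
    omega

lemma sockPath_eq_sub_two_mul_count {m : ℕ} (hm : m ≤ 2 * n) :
    sockPath n ω m = m - 2 * count (IsRepeat ω) m := by
  induction m with
  | zero => simp [sockPath]
  | succ m ih =>
    rw [sockPath_succ_of_lt ω hm, ih (by omega), count_succ]
    split_ifs <;> push_cast <;> ring

lemma count_isRepeat : count (IsRepeat ω) (2 * n) = n := by
  have h := two_mul_card_filter_lt_of_involutive (partner_involutive ω) (partner_ne ω)
  rw [count_eq_card_filter_range, card_filter, ← Fin.sum_univ_eq_sum_range]
  simp only [isRepeat_iff, ← card_filter]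
  rw [Fintype.card_fin] at h
  omega

lemma count_isRepeat_two_mul_sub_one (hn : 1 ≤ n) :
    count (IsRepeat ω) (2 * n - 1) = n - 1 := by
  have h := count_isRepeat ω
  rw [show 2 * n = 2 * n - 1 + 1 by omega, count_succ,
    if_pos (isRepeat_two_mul_sub_one ω hn)] at h
  omega

lemma nth_isRepeat_sub_one (hn : 1 ≤ n) : nth (IsRepeat ω) (n - 1) = 2 * n - 1 := by
  rw [← count_isRepeat_two_mul_sub_one ω hn, nth_count (isRepeat_two_mul_sub_one ω hn)]

lemma not_isDescent_sockPath_zero : ¬ IsDescent (sockPath n ω) 0 := by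
  rw [isDescent_sockPath]
  exact not_isRepeat_zero ω

lemma Kseq_sockPath_sub_one_le {j : ℕ} (hj1 : 1 ≤ j) (hjn : j < n) :
    Kseq (sockPath n ω) j - 1 ≤ Kseq (sockPath n ω) (j + 1) := by
  refine Kseq_sub_one_le_Kseq_succ (abs_sockPath_succ_sub_le ω)
    (not_isDescent_sockPath_zero ω) hj1 ?_
  rw [isDescent_sockPath]
  refine nth_ne_zero_anti (not_isRepeat_zero ω) (show j ≤ n - 1 by omega) ?_
  rw [nth_isRepeat_sub_one ω (by omega)]
  omega

lemma Kseq_sockPath_self (hn : 1 ≤ n) : Kseq (sockPath n ω) n = 1 := by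
  have hL : Lseq (sockPath n ω) n = 2 * n - 1 := by
    have h := Lseq_succ_eq_nth (not_isDescent_sockPath_zero ω) (j := n - 1)
      (by rw [isDescent_sockPath, nth_isRepeat_sub_one ω hn]; omega)
    rwa [Nat.sub_add_cancel hn, isDescent_sockPath, nth_isRepeat_sub_one ω hn] at h
  rw [Kseq, hL, sockPath_eq_sub_two_mul_count ω (by omega),
    count_isRepeat_two_mul_sub_one ω hn]
  omega

end SockPath

open Classical in
theorem stmt_1_general (n : ℕ) (hn : 1 ≤ n) (k : ℕ → ℕ)
    (hcond : ¬ ((∀ i, 1 ≤ i → i < n → k i ≤ k (i + 1) + 1) ∧ k n = 1)) :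
    (¬ ∃ ω : Fin (2 * n) ≃ Fin n × Bool,
        ∀ j, 1 ≤ j → j ≤ n → Kseq (sockPath n ⇑ω) j = (k j : ℤ)) ∧
      ((Finset.univ.filter fun ω : Fin (2 * n) ≃ Fin n × Bool =>
            ∀ j, 1 ≤ j → j ≤ n → Kseq (sockPath n ⇑ω) j = (k j : ℤ)).card : ℚ) /
          (Nat.factorial (2 * n) : ℚ) = 0 := by
  have hnone : ¬ ∃ ω : Fin (2 * n) ≃ Fin n × Bool,
      ∀ j, 1 ≤ j → j ≤ n → Kseq (sockPath n ⇑ω) j = (k j : ℤ) := by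
    rintro ⟨ω, hω⟩
    refine hcond ⟨fun i hi hin => ?_, ?_⟩
    · have h := Kseq_sockPath_sub_one_le ω hi hin
      rw [hω i hi hin.le, hω (i + 1) (by omega) hin] at h
      omega
    · have h := Kseq_sockPath_self ω hn
      rw [hω n hn le_rfl] at h
      omega
  refine ⟨hnone, ?_⟩
  simp only [not_exists] at hnone
  simp [hnone]

open Classical in
/-- If the positive integer tuple `(k 1, …, k n)` does not satisfy condition (1),
then no ordering of the socks gives `K_j(x(ω)) = k j` for all `j`; equivalently, the
event has probability zero under the uniform measure. -/
theorem stmt_1 (n : ℕ) (hn : 1 ≤ n) (k : ℕ → ℕ)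
    (hpos : ∀ i, 1 ≤ i → i ≤ n → 0 < k i)
    (hcond : ¬ ((∀ i, 1 ≤ i → i < n → k i ≤ k (i + 1) + 1) ∧ k n = 1)) :
    (¬ ∃ ω : Fin (2 * n) ≃ Fin n × Bool,
        ∀ j, 1 ≤ j → j ≤ n → Kseq (sockPath n ⇑ω) j = (k j : ℤ)) ∧
      ((Finset.univ.filter fun ω : Fin (2 * n) ≃ Fin n × Bool =>
            ∀ j, 1 ≤ j → j ≤ n → Kseq (sockPath n ⇑ω) j = (k j : ℤ)).card : ℚ) /
          (Nat.factorial (2 * n) : ℚ) = 0 :=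
  stmt_1_general n hn k hcond
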